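/- Equality of the slow and fast formulas: for all natural numbers n ≥ 1, x, y, z, and m with z ≥ 1, the following equality of integers holds: Σ_{k=z}^{m} C(y, k) · Σ_{(i_1,...,i_k)} (∏_{j=1}^{k} C(n-1, i_j)) · C((n - m)·(n-1), x - (i_1 + ... + i_k)) = Σ_{k=z}^{m} C(y, k) · Σ_{s=k}^{x} ( C(k·(n-1), s) + Σ_{j=1}^{k-1} (-1)^j · C(k, j) · C((k-j)·(n-1), s) ) · C((n - m)·(n-1), x - s), where the inner sum on the left ranges over all k-tuples of natural numbers with every i_j ≥ 1 and i_1 + ... + i_k ≤ x. -/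

import Mathlib

/-!
Write `M = n - 1`. The `k`-tuples of positive integers summing to `s`, weighted by
`∏ C(M, i_j)`, are counted by the coefficient of `X^s` in `((1 + X)^M - 1)^k`, since
`(1 + X)^M - 1` is the generating function of `C(M, i)` over `i ≥ 1`. Expanding the same power
by the binomial theorem gives `Σ_j (-1)^j C(k, j) C((k - j) M, s)`, whose terms `j = 0` and
`j = k` are `C(k M, s)` and, for `s ≥ 1`, zero. Grouping the tuples on the left by their sum `s`
then matches the two sides term by term.
-/

open Finset Polynomial

theorem Finset.sum_finsuppAntidiag_eq_sum_piAntidiag {ι μ M : Type*} [DecidableEq ι]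
    [AddCommMonoid μ] [HasAntidiagonal μ] [DecidableEq μ] [AddCommMonoid M]
    (s : Finset ι) (n : μ) (g : (ι → μ) → M) :
    ∑ l ∈ s.finsuppAntidiag n, g l = ∑ f ∈ s.piAntidiag n, g f := by
  rw [finsuppAntidiag, sum_map]
  exact sum_attach (s.piAntidiag n) g

theorem Finset.sum_range_succ_eq_add_sum_Icc_add {M : Type*} [AddCommMonoid M] {k : ℕ}
    (hk : 1 ≤ k) (f : ℕ → M) :
    ∑ j ∈ range (k + 1), f j = f 0 + ∑ j ∈ Icc 1 (k - 1), f j + f k := by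
  obtain ⟨k, rfl⟩ := Nat.exists_eq_add_of_le' hk
  rw [range_eq_Ico, sum_Ico_succ_top (by omega), sum_eq_sum_Ico_succ_bot (by omega)]
  rfl

def compositionTuples (k s : ℕ) : Finset (Fin k → ℕ) :=
  {l ∈ (univ : Finset (Fin k)).piAntidiag s | ∀ j, 1 ≤ l j}

theorem sum_filter_piFinset_range_eq_sum_Icc_sum_compositionTuples {M : Type*} [AddCommMonoid M] (k x : ℕ)
    (g : (Fin k → ℕ) → M) :
    ∑ i ∈ (Fintype.piFinset fun _ : Fin k => range (x + 1)).filter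
        (fun i => (∀ j, 1 ≤ i j) ∧ ∑ j, i j ≤ x), g i
      = ∑ s ∈ Icc k x, ∑ i ∈ compositionTuples k s, g i := by
  have hmaps : ∀ i ∈ (Fintype.piFinset fun _ : Fin k => range (x + 1)).filter
      (fun i => (∀ j, 1 ≤ i j) ∧ ∑ j, i j ≤ x), ∑ j, i j ∈ Icc k x := by
    intro i hi
    obtain ⟨-, hpos, hle⟩ := mem_filter.1 hi
    exact mem_Icc.2 ⟨by simpa using sum_le_sum fun j (_ : j ∈ univ) => hpos j, hle⟩
  rw [← sum_fiberwise_of_maps_to hmaps]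
  refine sum_congr rfl fun s hs => sum_congr ?_ fun _ _ => rfl
  ext i
  simp only [compositionTuples, mem_filter, Fintype.mem_piFinset, mem_range, mem_piAntidiag,
    mem_univ, ne_eq, implies_true, and_true]
  constructor
  · rintro ⟨⟨-, hpos, -⟩, hsum⟩
    exact ⟨hsum, hpos⟩
  · rintro ⟨hsum, hpos⟩
    have hpart (j : Fin k) : i j ≤ s :=
      hsum ▸ single_le_sum (fun _ _ => Nat.zero_le _) (mem_univ j)
    have hsx := (mem_Icc.1 hs).2
    exact ⟨⟨fun j => Nat.lt_succ_of_le ((hpart j).trans hsx), hpos, hsum ▸ hsx⟩, hsum⟩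

theorem Polynomial.coeff_prod_eq_sum_piAntidiag {ι R : Type*} [DecidableEq ι] [CommSemiring R]
    (s : Finset ι) (f : ι → R[X]) (d : ℕ) :
    (∏ i ∈ s, f i).coeff d = ∑ l ∈ s.piAntidiag d, ∏ i ∈ s, (f i).coeff (l i) := by
  rw [← coeff_coe, ← coeToPowerSeries.ringHom_apply, map_prod, PowerSeries.coeff_prod]
  simp only [coeToPowerSeries.ringHom_apply, coeff_coe]
  exact sum_finsuppAntidiag_eq_sum_piAntidiag s d fun l => ∏ i ∈ s, (f i).coeff (l i)

theorem Polynomial.coeff_one_add_X_pow_sub_one {R : Type*} [Ring R] (M i : ℕ) :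
    ((1 + X : R[X]) ^ M - 1).coeff i = if 1 ≤ i then (M.choose i : R) else 0 := by
  rcases i with _ | i <;> simp [coeff_one_add_X_pow, coeff_one]

theorem Polynomial.coeff_one_add_X_pow_sub_one_pow_eq_sum_compositionTuples {R : Type*}
    [CommRing R] (M k t : ℕ) :
    (((1 + X : R[X]) ^ M - 1) ^ k).coeff t
      = ∑ l ∈ compositionTuples k t, ∏ j, (M.choose (l j) : R) := by
  rw [← Fin.prod_const, coeff_prod_eq_sum_piAntidiag, compositionTuples, sum_filter]
  simp only [coeff_one_add_X_pow_sub_one, prod_ite_zero, mem_univ, true_imp_iff]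

theorem Polynomial.coeff_one_add_X_pow_sub_one_pow_eq_sum_range {R : Type*} [CommRing R]
    (M k t : ℕ) :
    (((1 + X : R[X]) ^ M - 1) ^ k).coeff t
      = ∑ j ∈ range (k + 1), (-1) ^ j * (k.choose j : R) * ((k - j) * M).choose t := by
  rw [sub_eq_neg_add, add_pow, finsetSum_coeff]
  refine sum_congr rfl fun j _ => ?_
  have hconst : (-1 : R[X]) ^ j * (k.choose j : R[X]) = C ((-1) ^ j * (k.choose j : R)) := by
    simp
  rw [mul_right_comm, hconst, coeff_C_mul, ← pow_mul, mul_comm M, coeff_one_add_X_pow]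

theorem sum_compositionTuples_prod_choose {R : Type*} [CommRing R] {k s : ℕ} (hk : 1 ≤ k)
    (hs : 1 ≤ s) (M : ℕ) :
    ∑ l ∈ compositionTuples k s, ∏ j, (M.choose (l j) : R)
      = (k * M).choose s
        + ∑ j ∈ Icc 1 (k - 1), (-1) ^ j * (k.choose j : R) * ((k - j) * M).choose s := by
  rw [← coeff_one_add_X_pow_sub_one_pow_eq_sum_compositionTuples,
    coeff_one_add_X_pow_sub_one_pow_eq_sum_range, sum_range_succ_eq_add_sum_Icc_add hk]
  simp [Nat.choose_eq_zero_of_lt hs, add_comm]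

theorem slow_eq_fast_formula_general (n x y z m : ℕ) (hz : 1 ≤ z) :
    (∑ k ∈ Finset.Icc z m, (Nat.choose y k : ℤ) *
        ∑ i ∈ (Fintype.piFinset fun _ : Fin k => Finset.range (x + 1)).filter
            (fun i => (∀ j, 1 ≤ i j) ∧ ∑ j, i j ≤ x),
          ((∏ j, Nat.choose (n - 1) (i j) : ℕ) : ℤ)
            * Nat.choose ((n - m) * (n - 1)) (x - ∑ j, i j))
      = ∑ k ∈ Finset.Icc z m, (Nat.choose y k : ℤ) *
          ∑ s ∈ Finset.Icc k x,
            ((Nat.choose (k * (n - 1)) s : ℤ)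
              + ∑ j ∈ Finset.Icc 1 (k - 1),
                  (-1 : ℤ) ^ j * Nat.choose k j * Nat.choose ((k - j) * (n - 1)) s)
              * Nat.choose ((n - m) * (n - 1)) (x - s) := by
  refine sum_congr rfl fun k hk => ?_
  have hk1 : 1 ≤ k := hz.trans (mem_Icc.1 hk).1
  rw [sum_filter_piFinset_range_eq_sum_Icc_sum_compositionTuples]
  refine congrArg _ (sum_congr rfl fun s hs => ?_)
  have hs1 : 1 ≤ s := hk1.trans (mem_Icc.1 hs).1
  rw [← sum_compositionTuples_prod_choose hk1 hs1, sum_mul]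
  refine sum_congr rfl fun l hl => ?_
  have hsum : ∑ j, l j = s := (mem_piAntidiag.1 (mem_filter.1 hl).1).1
  push_cast
  rw [hsum]

/-- Equality of the slow and fast formulas: for `n ≥ 1`, `z ≥ 1` and arbitrary
`x`, `y`, `m`, as integers,
`Σ_{k=z}^{m} C(y,k) * Σ_{(i_1,...,i_k)} (∏_j C(n-1, i_j)) *
  C((n-m)*(n-1), x - (i_1+...+i_k))
 = Σ_{k=z}^{m} C(y,k) * Σ_{s=k}^{x} (C(k*(n-1), s) +
  Σ_{j=1}^{k-1} (-1)^j * C(k,j) * C((k-j)*(n-1), s)) * C((n-m)*(n-1), x-s)`,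
where the inner sum on the left ranges over all `k`-tuples of positive natural
numbers with `i_1 + ... + i_k ≤ x`. -/
theorem slow_eq_fast_formula (n x y z m : ℕ) (hn : 1 ≤ n) (hz : 1 ≤ z) :
    (∑ k ∈ Finset.Icc z m, (Nat.choose y k : ℤ) *
        ∑ i ∈ (Fintype.piFinset fun _ : Fin k => Finset.range (x + 1)).filter
            (fun i => (∀ j, 1 ≤ i j) ∧ ∑ j, i j ≤ x),
          ((∏ j, Nat.choose (n - 1) (i j) : ℕ) : ℤ)
            * Nat.choose ((n - m) * (n - 1)) (x - ∑ j, i j))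
      = ∑ k ∈ Finset.Icc z m, (Nat.choose y k : ℤ) *
          ∑ s ∈ Finset.Icc k x,
            ((Nat.choose (k * (n - 1)) s : ℤ)
              + ∑ j ∈ Finset.Icc 1 (k - 1),
                  (-1 : ℤ) ^ j * Nat.choose k j * Nat.choose ((k - j) * (n - 1)) s)
              * Nat.choose ((n - m) * (n - 1)) (x - s) :=
  slow_eq_fast_formula_general n x y z m hz
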